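/- Let f, g, r_s, r_u : ℝ → ℝ be differentiable functions with f > 0, r_u > 0, and g = −f·r_s/r_u. If f' + g' + g·r_s + f·r_u = 0, then (r_u + r_s)/(r_u − r_s) = (1/(r_u − r_s))·(d/dt) log(r_u/(f·(r_u − r_s))), assuming r_u − r_s > 0 everywhere (and r_u, r_s, f differentiable). -/

import Mathlib

/-- the ODE manipulation of Theorem (cartan), with derivatives along the
flow modeled by `d/dt`: if `f > 0`, `r_u > 0`, `g = −f·r_s/r_u`,
`f' + g' + g·r_s + f·r_u = 0` and `r_u − r_s > 0`, then
`(r_u + r_s)/(r_u − r_s) = (1/(r_u − r_s))·(d/dt) log(r_u/(f·(r_u − r_s)))`. -/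
theorem stmt_10 (f g rs ru : ℝ → ℝ)
    (hfd : Differentiable ℝ f) (hgd : Differentiable ℝ g)
    (hrsd : Differentiable ℝ rs) (hrud : Differentiable ℝ ru)
    (hf : ∀ t, 0 < f t) (hru : ∀ t, 0 < ru t)
    (hg : ∀ t, g t = -(f t) * rs t / ru t)
    (hode : ∀ t, deriv f t + deriv g t + g t * rs t + f t * ru t = 0)
    (hdom : ∀ t, rs t < ru t) :
    ∀ t, (ru t + rs t) / (ru t - rs t)
      = (1 / (ru t - rs t)) *
        deriv (fun s => Real.log (ru s / (f s * (ru s - rs s)))) t := by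
  intro t
  have hft := (hfd t).hasDerivAt
  have hrst := (hrsd t).hasDerivAt
  have hrut := (hrud t).hasDerivAt
  have hden : 0 < f t * (ru t - rs t) := mul_pos (hf t) (sub_pos.2 (hdom t))
  have hh : HasDerivAt (fun s => ru s / (f s * (ru s - rs s)))
      ((deriv ru t * (f t * (ru t - rs t)) -
        ru t * (deriv f t * (ru t - rs t) + f t * (deriv ru t - deriv rs t))) /
        (f t * (ru t - rs t)) ^ 2) t :=
    hrut.div (hft.mul (hrut.sub hrst)) hden.ne'
  have hpos : 0 < ru t / (f t * (ru t - rs t)) := div_pos (hru t) hden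
  have hlog := hh.log hpos.ne'
  rw [hlog.deriv]
  have hgfun : g = fun s => -(f s) * rs s / ru s := funext hg
  have hgder : HasDerivAt g
      (((-(deriv f t) * rs t + -(f t) * deriv rs t) * ru t -
        -(f t) * rs t * deriv ru t) / (ru t) ^ 2) t := by
    rw [hgfun]; exact (hft.neg.mul hrst).div hrut (hru t).ne'
  have hode' := hode t
  rw [hgder.deriv, hg t] at hode'
  have h1 : ru t ≠ 0 := (hru t).ne'
  have h2 : f t ≠ 0 := (hf t).ne'
  have h3 : ru t - rs t ≠ 0 := (sub_pos.2 (hdom t)).ne'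
  field_simp at hode' ⊢
  have hode2 : deriv f t * ru t * (ru t - rs t) +
      f t * (rs t * deriv ru t - ru t * rs t ^ 2 - ru t * deriv rs t + ru t ^ 3) = 0 := by
    apply mul_left_cancel₀ h1
    linear_combination ru t * hode'
  linear_combination hode2
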